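/- Let κ be a field of characteristic p ≥ 5 and B = κ[[a,b,c]]/(a² − b³), identified with the subring κ[[t²,t³,c]] of κ[[t,c]] via a = t³, b = t². Let I' = (a^p, b^{2p}, c^p) ⊆ B. Then the quotient B/I' has length 3p² as a κ-vector space, with basis given by the classes of t^i c^j for i ∈ {0,2,3,…,3p−1,3p+1} and 0 ≤ j ≤ p−1. -/

import Mathlib

set_option synthInstance.maxHeartbeats 1000000
set_option maxHeartbeats 1000000

noncomputable section

open MvPowerSeries

/-- The ideal `(a² − b³)` in `κ[[a,b,c]]`, where `a = X 0`, `b = X 1`, `c = X 2`. -/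
def relB (κ : Type*) [Field κ] : Ideal (MvPowerSeries (Fin 3) κ) :=
  Ideal.span {(MvPowerSeries.X 0) ^ 2 - (MvPowerSeries.X 1) ^ 3}

/-- The ring `B = κ[[a,b,c]]/(a² − b³)`, i.e. `κ[[t²,t³,c]]` via `a = t³`, `b = t²`. -/
abbrev Bring (κ : Type*) [Field κ] := MvPowerSeries (Fin 3) κ ⧸ relB κ

/-- The Frobenius-power ideal `I' = (a^p, b^{2p}, c^p) ⊆ B`. -/
def Iprime (κ : Type*) [Field κ] (p : ℕ) : Ideal (Bring κ) :=
  Ideal.span {Ideal.Quotient.mk (relB κ) ((MvPowerSeries.X 0) ^ p),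
    Ideal.Quotient.mk (relB κ) ((MvPowerSeries.X 1) ^ (2 * p)),
    Ideal.Quotient.mk (relB κ) ((MvPowerSeries.X 2) ^ p)}

instance instAlgBring (κ : Type*) [Field κ] : Algebra κ (Bring κ) :=
  Ideal.Quotient.algebra κ

instance instAlgQuot (κ : Type*) [Field κ] (p : ℕ) : Algebra κ (Bring κ ⧸ Iprime κ p) :=
  Ideal.Quotient.algebra κ

/-- The class of `t^i c^j` in `B/I'`; under the identification `a = t³`, `b = t²` one has
`t^{2m} = b^m` and `t^{2m+3} = a·b^m`, so for `i ≠ 1` the monomial `t^i` is `b^{i/2}` when `i`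
is even and `a·b^{(i-3)/2}` when `i` is odd. -/
def basisElem (κ : Type*) [Field κ] (p i j : ℕ) : Bring κ ⧸ Iprime κ p :=
  Ideal.Quotient.mk (Iprime κ p) (Ideal.Quotient.mk (relB κ)
    ((if Even i then (MvPowerSeries.X 1 : MvPowerSeries (Fin 3) κ) ^ (i / 2)
      else MvPowerSeries.X 0 * (MvPowerSeries.X 1) ^ ((i - 3) / 2)) *
      (MvPowerSeries.X 2) ^ j))

/-!
Under `a ↦ t³`, `b ↦ t²` the relation `a² = b³` turns every monomial `a^α b^β c^γ` of `B` into
`t^{3α+2β} c^γ`, and `t^i` lies in `I'` as soon as `i ≥ 3p`, `i ≠ 3p + 1`, because then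
`t^i = a^p · t^{i-3p}`. Since a power series is a polynomial modulo `(a^p, b^{2p}, c^p)`, the
classes `t^i c^j` with `i ≤ 3p + 1`, `i ≠ 1, 3p`, `j < p` span `B/I'`.

For independence, map `B` into `κ⟦t, c⟧` and take the coefficient of `t^i c^j`. For `i, j` in the
range above this functional kills `I'`: the generators go to `t^{3p}`, `t^{4p}`, `c^p`, and
`t^{3p+1}` could only come from `t^{3p}` times a `t¹`-term, which no element of
`B = κ⟦t², t³, c⟧` has.
-/

theorem Nat.exists_eq_three_mul_add_two_mul {i : ℕ} (hi : i ≠ 1) : ∃ α β, i = 3 * α + 2 * β := by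
  obtain ⟨k, rfl | rfl⟩ := Nat.even_or_odd' i
  · exact ⟨0, k, by ring⟩
  · exact ⟨1, k - 1, by omega⟩

namespace MvPowerSeries

variable {σ R : Type*} [CommRing R]

theorem coeff_mul_X_pow_of_lt {m : σ →₀ ℕ} {s : σ} {n : ℕ} (h : m s < n)
    (G : MvPowerSeries σ R) : coeff m (G * X s ^ n) = 0 := by
  rw [X_pow_eq, coeff_mul_monomial, if_neg (by rw [Finsupp.single_le_iff]; omega)]

theorem sub_trunc'_mem_span_X_pow [Finite σ] [DecidableEq σ] (n : σ →₀ ℕ)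
    (F : MvPowerSeries σ R) :
    F - (trunc' R n F : MvPowerSeries σ R) ∈ Ideal.span (Set.range fun s => X s ^ (n s + 1)) := by
  set T := F - (trunc' R n F : MvPowerSeries σ R)
  have hT : ∀ m, m ≤ n → coeff m T = 0 := fun m hm => by
    simp [T, coeff_trunc', hm]
  rcases isEmpty_or_nonempty σ with hσ | hσ
  · rw [show T = 0 from ext fun m => by simpa using hT m fun s => isEmptyElim s]
    exact zero_mem _
  have : Fintype σ := Fintype.ofFinite σ
  -- Sort the monomials of `T` by a variable in which their exponent exceeds `n`.
  choose! c hc using fun m (h : ¬ m ≤ n) => (by simpa [Finsupp.le_def] using h : ∃ s, n s < m s)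
  let piece : σ → MvPowerSeries σ R := fun s m => if c m = s then coeff m T else 0
  have hsplit : T = ∑ s, piece s := by
    ext m
    rw [map_sum]
    show coeff m T = ∑ s, if c m = s then coeff m T else 0
    simp
  rw [hsplit]
  refine Ideal.sum_mem _ fun s _ => ?_
  obtain ⟨Q, hQ⟩ := (X_pow_dvd_iff (φ := piece s)).mpr fun m (hm : m s < n s + 1) => by
    show (if c m = s then coeff m T else 0) = 0
    split_ifs with hcm
    · by_cases hmn : m ≤ n
      · exact hT m hmn
      · have := hc m hmn
        subst hcm
        omega
    · rfl
  rw [hQ]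
  exact Ideal.mul_mem_right _ _ (Ideal.subset_span ⟨s, rfl⟩)

end MvPowerSeries

namespace Bring

open Finsupp

variable (κ : Type*) [Field κ]

local notation "mkB" => Ideal.Quotient.mk (relB κ)

-- The class of `t^i` for `i ≠ 1`; `tPow κ 1` is junk (it is `t³`).
def tPow (i : ℕ) : Bring κ :=
  mkB (if Even i then (X 1 : MvPowerSeries (Fin 3) κ) ^ (i / 2) else X 0 * X 1 ^ ((i - 3) / 2))

variable {κ}

theorem basisElem_eq (p i j : ℕ) :
    basisElem κ p i j = Ideal.Quotient.mk (Iprime κ p) (tPow κ i * mkB (X 2) ^ j) := by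
  rw [basisElem, tPow, map_mul, map_pow]

theorem mk_X_zero_sq : (mkB (X 0 : MvPowerSeries (Fin 3) κ)) ^ 2 = mkB (X 1) ^ 3 := by
  rw [← map_pow, ← map_pow, Ideal.Quotient.eq]
  exact Ideal.subset_span rfl

theorem tPow_three_mul_add_two_mul (α β : ℕ) :
    tPow κ (3 * α + 2 * β) = mkB (X 0) ^ α * mkB (X 1) ^ β := by
  obtain ⟨k, rfl | rfl⟩ := Nat.even_or_odd' α
  · rw [tPow, if_pos (by rw [Nat.even_iff]; omega), map_pow, pow_mul, mk_X_zero_sq, ← pow_mul,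
      ← pow_add]
    congr 1
    omega
  · rw [tPow, if_neg (by rw [Nat.not_even_iff_odd, Nat.odd_iff]; omega), map_mul, map_pow,
      pow_succ, pow_mul, mk_X_zero_sq, ← pow_mul, mul_comm _ (mkB (X 0)), mul_assoc, ← pow_add]
    congr 2
    omega

theorem tPow_add {i j : ℕ} (hi : i ≠ 1) (hj : j ≠ 1) : tPow κ (i + j) = tPow κ i * tPow κ j := by
  obtain ⟨α, β, rfl⟩ := Nat.exists_eq_three_mul_add_two_mul hi
  obtain ⟨α', β', rfl⟩ := Nat.exists_eq_three_mul_add_two_mul hj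
  rw [show 3 * α + 2 * β + (3 * α' + 2 * β') = 3 * (α + α') + 2 * (β + β') by ring,
    tPow_three_mul_add_two_mul, tPow_three_mul_add_two_mul, tPow_three_mul_add_two_mul]
  ring

theorem tPow_mem_Iprime {p i : ℕ} (hi : 3 * p ≤ i) (hi' : i ≠ 3 * p + 1) :
    tPow κ i ∈ Iprime κ p := by
  obtain ⟨k, rfl⟩ := Nat.exists_eq_add_of_le hi
  rw [tPow_add (by omega) (by omega), ← add_zero (3 * p), ← mul_zero 2,
    tPow_three_mul_add_two_mul, pow_zero, mul_one, ← map_pow]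
  exact Ideal.mul_mem_right _ _ (Ideal.subset_span (by simp))

abbrev TDegrees (p : ℕ) := {i : ℕ // i ≤ 3 * p + 1 ∧ i ≠ 1 ∧ i ≠ 3 * p}

theorem card_tDegrees (p : ℕ) : Nat.card (TDegrees p) = 3 * p := by
  have hmem (i : ℕ) :
      i ∈ Finset.range (3 * p + 2) \ {1, 3 * p} ↔ i ≤ 3 * p + 1 ∧ i ≠ 1 ∧ i ≠ 3 * p := by
    simp only [Finset.mem_sdiff, Finset.mem_range, Finset.mem_insert, Finset.mem_singleton]
    omega
  have hsub : {1, 3 * p} ⊆ Finset.range (3 * p + 2) := by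
    intro i hi
    simp only [Finset.mem_insert, Finset.mem_singleton] at hi
    exact Finset.mem_range.mpr (by omega)
  rw [← Nat.card_congr (Equiv.subtypeEquivRight hmem), Nat.card_eq_fintype_card, Fintype.card_coe,
    Finset.card_sdiff_of_subset hsub, Finset.card_range, Finset.card_pair (by omega)]
  omega

theorem mk_tPow_mul_mem_span {p i j : ℕ} (hi : i ≠ 1) (hj : j < p) :
    Ideal.Quotient.mk (Iprime κ p) (tPow κ i * mkB (X 2) ^ j) ∈
      Submodule.span κ (Set.range fun x : TDegrees p × Fin p => basisElem κ p x.1.1 x.2.1) := by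
  by_cases h : i ≤ 3 * p + 1 ∧ i ≠ 3 * p
  · exact Submodule.subset_span ⟨(⟨i, h.1, hi, h.2⟩, ⟨j, hj⟩), basisElem_eq p i j⟩
  · rw [Ideal.Quotient.eq_zero_iff_mem.mpr
      (Ideal.mul_mem_right _ _ (tPow_mem_Iprime (κ := κ) (p := p) (by omega) (by omega)))]
    exact zero_mem _

theorem mk_monomial_mem_span {p : ℕ} {m : Fin 3 →₀ ℕ} (hm : m 2 < p) :
    Ideal.Quotient.mk (Iprime κ p) (mkB (monomial m 1)) ∈
      Submodule.span κ (Set.range fun x : TDegrees p × Fin p => basisElem κ p x.1.1 x.2.1) := by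
  rw [monomial_one_eq, map_finsuppProd, Finsupp.prod_fintype _ _ fun _ => by simp,
    Fin.prod_univ_three, map_pow, map_pow, ← tPow_three_mul_add_two_mul]
  exact mk_tPow_mul_mem_span (by omega) hm

theorem span_basisElem_eq_top {p : ℕ} (hp : 1 ≤ p) :
    Submodule.span κ (Set.range fun x : TDegrees p × Fin p => basisElem κ p x.1.1 x.2.1) = ⊤ := by
  rw [eq_top_iff]
  rintro y -
  obtain ⟨x, rfl⟩ := Ideal.Quotient.mk_surjective y
  obtain ⟨F, rfl⟩ := Ideal.Quotient.mk_surjective x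
  set ψ := (Ideal.Quotient.mkₐ κ (Iprime κ p)).comp (Ideal.Quotient.mkₐ κ (relB κ))
  set n : Fin 3 →₀ ℕ := single 0 (p - 1) + single 1 (2 * p - 1) + single 2 (p - 1)
  have hgen : ∀ s, ψ (X s ^ (n s + 1)) = 0 := by
    intro s
    rw [AlgHom.comp_apply, Ideal.Quotient.mkₐ_eq_mk, Ideal.Quotient.mkₐ_eq_mk,
      Ideal.Quotient.eq_zero_iff_mem, Iprime]
    apply Ideal.subset_span
    fin_cases s <;> simp [n, Nat.sub_add_cancel hp, Nat.sub_add_cancel (by omega : 1 ≤ 2 * p)]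
  have hbox : Ideal.span (Set.range fun s => X s ^ (n s + 1)) ≤ RingHom.ker ψ :=
    Ideal.span_le.mpr fun _ ⟨s, hs⟩ => hs ▸ RingHom.mem_ker.mpr (hgen s)
  have htrunc : ψ F = ψ (trunc' κ n F) := by
    rw [← sub_eq_zero, ← map_sub]
    exact hbox (sub_trunc'_mem_span_X_pow n F)
  change ψ F ∈ _
  rw [htrunc, MvPolynomial.as_sum (trunc' κ n F),
    ← MvPolynomial.coeToMvPowerSeries.ringHom_apply, map_sum, map_sum]
  refine Submodule.sum_mem _ fun m hm => ?_
  have hmn : m ≤ n := by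
    by_contra h
    exact MvPolynomial.mem_support_iff.mp hm (by rw [coeff_trunc', if_neg h])
  have hsmul (a : κ) : (monomial m a : MvPowerSeries (Fin 3) κ) = a • monomial m 1 := by
    rw [← map_smul, smul_eq_mul, mul_one]
  rw [MvPolynomial.coeToMvPowerSeries.ringHom_apply, MvPolynomial.coe_monomial, hsmul, map_smul]
  refine Submodule.smul_mem _ _ (mk_monomial_mem_span ?_)
  have h2 : m 2 ≤ p - 1 := by simpa [n] using hmn 2
  omega

-- `a ↦ t³`, `b ↦ t²`, `c ↦ c`, where `t = X 0` and `c = X 1`.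
variable (κ) in
def cuspParam : Fin 3 → MvPowerSeries (Fin 2) κ := ![X 0 ^ 3, X 0 ^ 2, X 1]

theorem hasSubst_cuspParam : HasSubst (cuspParam κ) :=
  hasSubst_of_constantCoeff_zero fun s => by fin_cases s <;> simp [cuspParam]

variable (κ) in
def paramHom : Bring κ →ₐ[κ] MvPowerSeries (Fin 2) κ :=
  Ideal.Quotient.liftₐ (relB κ) (substAlgHom hasSubst_cuspParam) fun F hF => by
    obtain ⟨G, rfl⟩ := Ideal.mem_span_singleton'.mp hF
    have hcusp : cuspParam κ 0 ^ 2 - cuspParam κ 1 ^ 3 = 0 := by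
      simp only [cuspParam, Matrix.cons_val_zero, Matrix.cons_val_one]
      ring
    rw [map_mul, map_sub, map_pow, map_pow, substAlgHom_X, substAlgHom_X, hcusp, mul_zero]

theorem paramHom_mk (F : MvPowerSeries (Fin 3) κ) :
    paramHom κ (mkB F) = substAlgHom hasSubst_cuspParam F := rfl

theorem prod_cuspParam_pow (d : Fin 3 →₀ ℕ) :
    (d.prod fun s e => cuspParam κ s ^ e) =
      monomial (single 0 (3 * d 0 + 2 * d 1) + single 1 (d 2)) 1 := by
  rw [Finsupp.prod_fintype _ _ fun _ => pow_zero _, Fin.prod_univ_three]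
  show (X 0 ^ 3) ^ d 0 * (X 0 ^ 2) ^ d 1 * X 1 ^ d 2 = _
  rw [← pow_mul, ← pow_mul, ← pow_add, X_pow_eq, X_pow_eq, monomial_mul_monomial, mul_one]

theorem coeff_paramHom_single_one (x : Bring κ) (j : ℕ) :
    coeff (single 0 1 + single 1 j) (paramHom κ x) = 0 := by
  obtain ⟨F, rfl⟩ := Ideal.Quotient.mk_surjective x
  rw [paramHom_mk, substAlgHom_apply, coeff_subst hasSubst_cuspParam]
  refine finsum_eq_zero_of_forall_eq_zero fun d => ?_
  rw [prod_cuspParam_pow, coeff_monomial, if_neg, smul_zero]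
  intro h
  have : 1 = 3 * d 0 + 2 * d 1 := by simpa using congrArg (· 0) h
  omega

theorem paramHom_tPow {i : ℕ} (hi : i ≠ 1) : paramHom κ (tPow κ i) = X 0 ^ i := by
  obtain ⟨α, β, rfl⟩ := Nat.exists_eq_three_mul_add_two_mul hi
  rw [tPow_three_mul_add_two_mul, map_mul, map_pow, map_pow, paramHom_mk, paramHom_mk,
    substAlgHom_X, substAlgHom_X]
  simp [cuspParam, ← pow_mul, pow_add]

theorem paramHom_mk_X (s : Fin 3) : paramHom κ (mkB (X s)) = cuspParam κ s := by
  rw [paramHom_mk, substAlgHom_X]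

variable (κ) in
def tcCoeff (i j : ℕ) : Bring κ →ₗ[κ] κ :=
  coeff (single 0 i + single 1 j) ∘ₗ (paramHom κ).toLinearMap

theorem tcCoeff_apply (i j : ℕ) (x : Bring κ) :
    tcCoeff κ i j x = coeff (single 0 i + single 1 j) (paramHom κ x) := rfl

theorem tcCoeff_tPow_mul {i' : ℕ} (hi' : i' ≠ 1) (i j j' : ℕ) :
    tcCoeff κ i j (tPow κ i' * mkB (X 2) ^ j') = if i = i' ∧ j = j' then 1 else 0 := by
  rw [tcCoeff_apply, map_mul, map_pow, paramHom_tPow hi', paramHom_mk_X]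
  show coeff _ (X 0 ^ i' * X 1 ^ j') = _
  rw [X_pow_eq, X_pow_eq, monomial_mul_monomial, mul_one, coeff_monomial]
  refine if_congr ⟨fun h => ⟨?_, ?_⟩, by rintro ⟨rfl, rfl⟩; rfl⟩ rfl rfl
  · simpa using congrArg (· 0) h
  · simpa using congrArg (· 1) h

theorem tcCoeff_eq_zero_of_mem_Iprime {p i j : ℕ} (hp : 2 ≤ p) (hi : i ≤ 3 * p + 1)
    (hi' : i ≠ 3 * p) (hj : j < p) {x : Bring κ} (hx : x ∈ Iprime κ p) : tcCoeff κ i j x = 0 := by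
  suffices h : ∀ r, tcCoeff κ i j (r * x) = 0 by simpa using h 1
  refine Submodule.span_induction ?_ (by simp) (fun x y _ _ hx hy r => ?_)
    (fun s x _ hx r => ?_) hx
  · rintro g (rfl | rfl | rfl) r <;>
      rw [tcCoeff_apply, map_mul, map_pow, map_pow, paramHom_mk_X] <;>
      simp only [cuspParam, Matrix.cons_val_zero, Matrix.cons_val_one, Matrix.cons_val_two,
        Matrix.tail_cons, Matrix.head_cons, ← pow_mul]
    · rcases Nat.lt_or_ge i (3 * p) with h | h
      · exact coeff_mul_X_pow_of_lt (by simpa using h) _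
      · -- `t^{3p+1} = t^{3p} · t`, and nothing in the image of `B` has a `t¹`-term.
        obtain rfl : i = 3 * p + 1 := by omega
        rw [add_comm (3 * p) 1, single_add, add_right_comm, X_pow_eq, coeff_add_mul_monomial,
          coeff_paramHom_single_one, zero_mul]
    · exact coeff_mul_X_pow_of_lt (by simpa using (by omega : i < 2 * (2 * p))) _
    · exact coeff_mul_X_pow_of_lt (by simpa using hj) _
  · rw [mul_add, map_add, hx, hy, add_zero]
  · rw [smul_eq_mul, ← mul_assoc, hx]

theorem linearIndependent_basisElem {p : ℕ} (hp : 2 ≤ p) :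
    LinearIndependent κ (fun x : TDegrees p × Fin p => basisElem κ p x.1.1 x.2.1) := by
  rw [linearIndependent_iff']
  intro s g hg x hx
  have hmem : ∑ y ∈ s, g y • (tPow κ y.1.1 * mkB (X 2) ^ (y.2 : ℕ)) ∈ Iprime κ p := by
    rw [← Ideal.Quotient.eq_zero_iff_mem, ← Ideal.Quotient.mkₐ_eq_mk κ, map_sum]
    simpa only [map_smul, Ideal.Quotient.mkₐ_eq_mk, basisElem_eq] using hg
  calc g x = tcCoeff κ x.1.1 x.2 (∑ y ∈ s, g y • (tPow κ y.1.1 * mkB (X 2) ^ (y.2 : ℕ))) := by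
        rw [map_sum, Finset.sum_eq_single_of_mem x hx]
        · rw [map_smul, tcCoeff_tPow_mul x.1.2.2.1, if_pos ⟨rfl, rfl⟩, smul_eq_mul, mul_one]
        · intro y _ hyx
          rw [map_smul, tcCoeff_tPow_mul y.1.2.2.1, if_neg, smul_zero]
          rintro ⟨h1, h2⟩
          exact hyx (Prod.ext (Subtype.ext h1.symm) (Fin.ext h2.symm))
    _ = 0 := tcCoeff_eq_zero_of_mem_Iprime hp x.1.2.1 x.1.2.2.2 x.2.2 hmem

end Bring

theorem frobenius_power_colength_general (κ : Type*) [Field κ] (p : ℕ) (hp : 5 ≤ p) :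
    Module.finrank κ (Bring κ ⧸ Iprime κ p) = 3 * p ^ 2 ∧
    LinearIndependent κ
      (fun x : {i : ℕ // i ≤ 3 * p + 1 ∧ i ≠ 1 ∧ i ≠ 3 * p} × Fin p =>
        basisElem κ p x.1.1 x.2.1) ∧
    Submodule.span κ (Set.range
      (fun x : {i : ℕ // i ≤ 3 * p + 1 ∧ i ≠ 1 ∧ i ≠ 3 * p} × Fin p =>
        basisElem κ p x.1.1 x.2.1)) = ⊤ := by
  have hli := Bring.linearIndependent_basisElem (κ := κ) (p := p) (by omega)
  have hspan := Bring.span_basisElem_eq_top (κ := κ) (p := p) (by omega)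
  refine ⟨?_, hli, hspan⟩
  rw [Module.finrank_eq_nat_card_basis (Module.Basis.mk hli hspan.ge), Nat.card_prod,
    Bring.card_tDegrees, Nat.card_eq_fintype_card, Fintype.card_fin]
  ring

/-- Let `κ` be a field of characteristic `p ≥ 5` and
`B = κ[[a,b,c]]/(a² − b³) = κ[[t²,t³,c]]`, `I' = (a^p, b^{2p}, c^p)`.  Then `B/I'` has length
`3p²` as a `κ`-vector space, with basis given by the classes of `t^i c^j` for
`i ∈ {0,2,3,…,3p−1,3p+1}` and `0 ≤ j ≤ p−1`. -/
theorem frobenius_power_colength (κ : Type*) [Field κ] (p : ℕ) [Fact p.Prime] [CharP κ p]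
    (hp : 5 ≤ p) :
    Module.finrank κ (Bring κ ⧸ Iprime κ p) = 3 * p ^ 2 ∧
    LinearIndependent κ
      (fun x : {i : ℕ // i ≤ 3 * p + 1 ∧ i ≠ 1 ∧ i ≠ 3 * p} × Fin p =>
        basisElem κ p x.1.1 x.2.1) ∧
    Submodule.span κ (Set.range
      (fun x : {i : ℕ // i ≤ 3 * p + 1 ∧ i ≠ 1 ∧ i ≠ 3 * p} × Fin p =>
        basisElem κ p x.1.1 x.2.1)) = ⊤ :=
  frobenius_power_colength_general κ p hp
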